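/- arXiv:2401.12094 — 3 statements merged into one kernel-verified Lean document; each statement's English description precedes it below -/
import Mathlib

section
/- Let n, k, s, t be positive integers with k ≤ n. For every monotone s-CNF f on the variable set K([n]) and every monotone restriction R ⊆ K([n]), there exists a monotone t-DNF g on K([n]) such that g_R ≤ f_R (pointwise on subsets of K([n]) \ R) and |Z_R(f) \ Z_R(g)| ≤ binom(n,k) · (s·k/n)^{√(t/2)}. -/
/-- Edges of the complete graph on `[n] = Fin n`: non-diagonal unordered pairs.
This is the variable set `K([n])`. -/
abbrev Edge (n : ℕ) := {e : Sym2 (Fin n) // ¬ e.IsDiag}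

/-- `KE A` is the set of edges with both endpoints in `A`, i.e. `K(A)`. -/
def KE {n : ℕ} (A : Finset (Fin n)) : Finset (Edge n) :=
  Finset.univ.filter (fun e => e.1 ∈ A.sym2)

/-- Evaluation of the monotone CNF with set of clauses `C` on input `G`:
every clause must contain a true variable. -/
def cnfEval {α : Type} [DecidableEq α] (C : Finset (Finset α)) (G : Finset α) : Prop :=
  ∀ q ∈ C, (q ∩ G).Nonempty

/-- Evaluation of the monotone DNF with set of terms `D` on input `G`:
some term must have all its variables true. -/
def dnfEval {α : Type} (D : Finset (Finset α)) (G : Finset α) : Prop :=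
  ∃ q ∈ D, q ⊆ G

open Classical in
/-- `ZR k F R` is `Z_R(F)`: the set of `k`-element vertex sets `A ⊆ [n]` such
that `F(K(A) ∪ R) = 1`, i.e. the cliques forcing `F` to true under the
monotone restriction fixing the variables in `R` to true. -/
noncomputable def ZR {n : ℕ} (k : ℕ) (F : Finset (Edge n) → Prop)
    (R : Finset (Edge n)) : Finset (Finset (Fin n)) :=
  Finset.univ.filter (fun A => A.card = k ∧ F (KE A ∪ R))

/-!
Take for `g` the DNF whose terms are the edge sets `K(B)` of the vertex sets `B` with
`|B| ≤ c := ⌈√(t/2)⌉` that force `f` under `R`; its terms have at most `C(c+1, 2) ≤ t`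
variables and `g_R ≤ f_R` by monotonicity. A `k`-clique `A` counted in the error forces `f`
while no `B ⊆ A` with `|B| < c` does, and such cliques are found by a decision tree: while the
known part `V ⊆ A` has fewer than `c` vertices, some clause of `f` misses `K(V) ∪ R`, yet it is
hit inside `K(A)`; each of its at most `s` edges has an endpoint outside `V`, and branching
over them adds a vertex of `A` to `V`. After `c` rounds
`c` vertices of `A` are known, so there are at most `s^c C(n-c, k-c) ≤ C(n,k) (sk/n)^c` such
cliques, and `(sk/n)^c ≤ (sk/n)^√(t/2)` unless `sk/n ≥ 1`, when the bound `C(n,k)` is trivial.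
-/

open Finset

lemma Nat.descFactorial_mul_pow_le {k n : ℕ} (h : k ≤ n) (c : ℕ) :
    k.descFactorial c * n ^ c ≤ n.descFactorial c * k ^ c := by
  have hprod (m b : ℕ) : m.descFactorial c * b ^ c = ∏ i ∈ range c, (m - i) * b := by
    rw [Nat.descFactorial_eq_prod_range, ← prod_mul_pow_card, card_range]
  rw [hprod, hprod]
  refine prod_le_prod' fun i _ => ?_
  rw [Nat.sub_mul, Nat.sub_mul, Nat.mul_comm k n]
  exact Nat.sub_le_sub_left (Nat.mul_le_mul_left i h) _

lemma Nat.choose_sub_mul_pow_le {n k c : ℕ} (hck : c ≤ k) (hkn : k ≤ n) :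
    (n - c).choose (k - c) * n ^ c ≤ n.choose k * k ^ c := by
  have hpos : 0 < n.descFactorial c :=
    Nat.pos_of_ne_zero (by rw [Ne, Nat.descFactorial_eq_zero_iff_lt]; omega)
  have hmul : n.choose k * k.descFactorial c = n.descFactorial c * (n - c).choose (k - c) := by
    rw [Nat.descFactorial_eq_factorial_mul_choose, Nat.descFactorial_eq_factorial_mul_choose,
      mul_left_comm, Nat.choose_mul hck, mul_assoc]
  refine Nat.le_of_mul_le_mul_left ?_ hpos
  calc n.descFactorial c * ((n - c).choose (k - c) * n ^ c)
      = n.choose k * (k.descFactorial c * n ^ c) := by rw [← mul_assoc, ← hmul, mul_assoc]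
    _ ≤ n.choose k * (n.descFactorial c * k ^ c) :=
        Nat.mul_le_mul_left _ (Nat.descFactorial_mul_pow_le hkn c)
    _ = n.descFactorial c * (n.choose k * k ^ c) := by ring

lemma pow_mul_choose_sub_le {n k c : ℕ} (hck : c ≤ k) (hkn : k ≤ n) (s : ℕ) :
    (s : ℝ) ^ c * (n - c).choose (k - c) ≤ n.choose k * ((s : ℝ) * k / n) ^ c := by
  rcases Nat.eq_zero_or_pos n with rfl | hn
  · obtain rfl : c = 0 := by omega
    simp
  rw [div_pow, mul_pow, ← mul_div_assoc, le_div_iff₀ (by positivity)]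
  have hnat : ((n - c).choose (k - c) * n ^ c : ℝ) ≤ n.choose k * k ^ c := by
    exact_mod_cast Nat.choose_sub_mul_pow_le hck hkn
  calc (s : ℝ) ^ c * (n - c).choose (k - c) * n ^ c
      = (s : ℝ) ^ c * ((n - c).choose (k - c) * n ^ c) := by ring
    _ ≤ (s : ℝ) ^ c * (n.choose k * k ^ c) := by gcongr
    _ = n.choose k * ((s : ℝ) ^ c * k ^ c) := by ring

lemma choose_two_ceil_sqrt_half_le (t : ℕ) : (⌈√((t : ℝ) / 2)⌉₊ + 1).choose 2 ≤ t := by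
  obtain hc | hc := Nat.eq_zero_or_pos ⌈√((t : ℝ) / 2)⌉₊
  · rw [hc]
    simp
  obtain ⟨m, hm⟩ : ∃ m, ⌈√((t : ℝ) / 2)⌉₊ = m + 1 := ⟨_, (Nat.succ_pred_eq_of_pos hc).symm⟩
  have hlt : (m : ℝ) < √((t : ℝ) / 2) := Nat.lt_ceil.1 (by omega)
  have hsq : 2 * m ^ 2 < t := by
    have := (Real.lt_sqrt (Nat.cast_nonneg m)).1 hlt
    exact_mod_cast (by push_cast; linarith : ((2 * m ^ 2 : ℕ) : ℝ) < t)
  rw [hm, Nat.choose_two_right]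
  refine Nat.div_le_of_le_mul ?_
  rw [Nat.add_sub_cancel]
  nlinarith [Nat.le_self_pow two_ne_zero m]

lemma le_mul_rpow_of_le_mul_pow {x N ρ ε : ℝ} {c : ℕ} (hN : 0 ≤ N) (hxN : x ≤ N)
    (hxc : x ≤ N * ρ ^ c) (hρ : 0 ≤ ρ) (hε : 0 ≤ ε) (hεc : ε ≤ c) : x ≤ N * ρ ^ ε := by
  rcases le_total 1 ρ with h1 | h1
  · exact hxN.trans (le_mul_of_one_le_right hN (Real.one_le_rpow h1 hε))
  · refine hxc.trans (mul_le_mul_of_nonneg_left ?_ hN)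
    rw [← Real.rpow_natCast]
    exact Real.rpow_le_rpow_of_exponent_ge' hρ h1 hε hεc

lemma cnfEval_mono {α : Type} [DecidableEq α] {C : Finset (Finset α)} {G H : Finset α}
    (hGH : G ⊆ H) (hG : cnfEval C G) : cnfEval C H :=
  fun q hq => (hG q hq).mono (inter_subset_inter_left hGH)

variable {n : ℕ}

lemma mem_KE_iff_forall_mem {A : Finset (Fin n)} {e : Edge n} : e ∈ KE A ↔ ∀ v ∈ e.1, v ∈ A := by
  simp [KE, mem_sym2_iff]

lemma KE_mono {A B : Finset (Fin n)} (h : A ⊆ B) : KE A ⊆ KE B := fun _ he =>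
  mem_KE_iff_forall_mem.2 fun v hv => h (mem_KE_iff_forall_mem.1 he v hv)

lemma card_KE_le (B : Finset (Fin n)) : #(KE B) ≤ (#B + 1).choose 2 := by
  rw [← card_sym2]
  exact card_le_card_of_injOn Subtype.val (fun e he => mem_coe.2 (mem_filter.1 he).2)
    Subtype.val_injective.injOn

lemma card_ZR_le (k : ℕ) (F : Finset (Edge n) → Prop) (R : Finset (Edge n)) :
    #(ZR k F R) ≤ n.choose k := by
  classical
  calc #(ZR k F R) ≤ #(powersetCard k (univ : Finset (Fin n))) :=
        card_le_card fun A hA => mem_powersetCard_univ.2 (mem_filter.1 hA).2.1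
    _ = n.choose k := by simp

lemma card_filter_superset_le_of_small_not_cnfEval {s k c : ℕ} {C : Finset (Finset (Edge n))}
    (hC : ∀ q ∈ C, #q ≤ s) {R : Finset (Edge n)} {S : Finset (Finset (Fin n))}
    (hS : ∀ A ∈ S, #A = k ∧ cnfEval C (KE A ∪ R) ∧ ∀ B ⊆ A, #B < c → ¬ cnfEval C (KE B ∪ R))
    (hck : c ≤ k) (d : ℕ) (V : Finset (Fin n)) (hV : #V + d = c) :
    #(S.filter (V ⊆ ·)) ≤ s ^ d * (n - c).choose (k - c) := by
  induction d generalizing V with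
  | zero =>
    calc #(S.filter (V ⊆ ·)) ≤ #((powersetCard k univ).filter (V ⊆ ·)) :=
          card_le_card (filter_subset_filter _ fun A hA => mem_powersetCard_univ.2 (hS A hA).1)
      _ = s ^ 0 * (n - c).choose (k - c) := by
          rw [card_filter_powersetCard_subset V univ k (subset_univ V) (by omega)]
          simp [← hV]
  | succ d ih =>
    obtain h | ⟨A₀, hA₀⟩ := (S.filter (V ⊆ ·)).eq_empty_or_nonempty
    · simp [h]
    obtain ⟨hA₀S, hVA₀⟩ := mem_filter.1 hA₀
    obtain ⟨q, hqC, hq⟩ : ∃ q ∈ C, Disjoint q (KE V ∪ R) := by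
      simpa [cnfEval, not_nonempty_iff_eq_empty, disjoint_iff_inter_eq_empty] using
        (hS A₀ hA₀S).2.2 V hVA₀ (by omega)
    have hnew : ∀ e : q, ∃ v ∈ e.1.1, v ∉ V := fun e => by
      have : e.1 ∉ KE V := fun h => disjoint_left.1 hq e.2 (mem_union_left _ h)
      simpa [mem_KE_iff_forall_mem] using this
    choose v hvE hvV using hnew
    have hcover : S.filter (V ⊆ ·) ⊆ q.attach.biUnion fun e => S.filter (insert (v e) V ⊆ ·) := by
      intro A hA
      obtain ⟨hAS, hVA⟩ := mem_filter.1 hA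
      obtain ⟨e, he⟩ := (hS A hAS).2.1 q hqC
      obtain ⟨heq, heA⟩ := mem_inter.1 he
      have heKA : e ∈ KE A := (mem_union.1 heA).resolve_right fun h =>
        disjoint_left.1 hq heq (mem_union_right _ h)
      exact mem_biUnion.2 ⟨⟨e, heq⟩, mem_attach _ _, mem_filter.2
        ⟨hAS, insert_subset (mem_KE_iff_forall_mem.1 heKA _ (hvE ⟨e, heq⟩)) hVA⟩⟩
    calc #(S.filter (V ⊆ ·)) ≤ ∑ e ∈ q.attach, #(S.filter (insert (v e) V ⊆ ·)) :=
          (card_le_card hcover).trans card_biUnion_le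
      _ ≤ #q * (s ^ d * (n - c).choose (k - c)) := by
          rw [← card_attach (s := q)]
          refine sum_le_card_nsmul _ _ _ fun e _ => ih _ ?_
          rw [card_insert_of_notMem (hvV e)]
          omega
      _ ≤ s ^ (d + 1) * (n - c).choose (k - c) := by
          rw [pow_succ', mul_assoc]
          exact Nat.mul_le_mul_right _ (hC q hqC)

open Classical in
noncomputable def smallCliqueDNF (C : Finset (Finset (Edge n))) (R : Finset (Edge n)) (c : ℕ) :
    Finset (Finset (Edge n)) :=
  (univ.filter fun B : Finset (Fin n) => #B ≤ c ∧ cnfEval C (KE B ∪ R)).image KE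

section smallCliqueDNF

variable {C : Finset (Finset (Edge n))} {R : Finset (Edge n)} {c : ℕ}

lemma mem_smallCliqueDNF {q : Finset (Edge n)} :
    q ∈ smallCliqueDNF C R c ↔ ∃ B, (#B ≤ c ∧ cnfEval C (KE B ∪ R)) ∧ KE B = q := by
  simp [smallCliqueDNF]

lemma card_le_of_mem_smallCliqueDNF {q : Finset (Edge n)} (hq : q ∈ smallCliqueDNF C R c) :
    #q ≤ (c + 1).choose 2 := by
  obtain ⟨B, ⟨hBc, -⟩, rfl⟩ := mem_smallCliqueDNF.1 hq
  exact (card_KE_le B).trans (Nat.choose_le_choose 2 (by omega))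

lemma cnfEval_of_dnfEval_smallCliqueDNF {G : Finset (Edge n)} (hRG : R ⊆ G)
    (h : dnfEval (smallCliqueDNF C R c) G) : cnfEval C G := by
  obtain ⟨q, hq, hqG⟩ := h
  obtain ⟨B, ⟨-, hB⟩, rfl⟩ := mem_smallCliqueDNF.1 hq
  exact cnfEval_mono (union_subset hqG hRG) hB

lemma forall_not_cnfEval_of_mem_ZR_sdiff {k : ℕ} {A : Finset (Fin n)}
    (hA : A ∈ ZR k (cnfEval C) R \ ZR k (dnfEval (smallCliqueDNF C R c)) R) :
    #A = k ∧ cnfEval C (KE A ∪ R) ∧ ∀ B ⊆ A, #B ≤ c → ¬ cnfEval C (KE B ∪ R) := by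
  simp only [ZR, mem_sdiff, mem_filter, mem_univ, true_and, not_and] at hA
  obtain ⟨⟨hAk, hAC⟩, hAD⟩ := hA
  refine ⟨hAk, hAC, fun B hBA hBc hB => hAD hAk ⟨KE B, ?_, ?_⟩⟩
  · exact mem_smallCliqueDNF.2 ⟨B, ⟨hBc, hB⟩, rfl⟩
  · exact (KE_mono hBA).trans subset_union_left

lemma card_ZR_sdiff_smallCliqueDNF_le {s k : ℕ} (hkn : k ≤ n) (hC : ∀ q ∈ C, #q ≤ s) :
    (#(ZR k (cnfEval C) R \ ZR k (dnfEval (smallCliqueDNF C R c)) R) : ℝ) ≤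
      n.choose k * ((s : ℝ) * k / n) ^ c := by
  set S := ZR k (cnfEval C) R \ ZR k (dnfEval (smallCliqueDNF C R c)) R
  have hS := fun A (hA : A ∈ S) => forall_not_cnfEval_of_mem_ZR_sdiff hA
  rcases lt_or_ge k c with hkc | hck
  · have : S = ∅ := eq_empty_of_forall_notMem fun A hA =>
      (hS A hA).2.2 A Subset.rfl ((hS A hA).1.trans_lt hkc).le (hS A hA).2.1
    rw [this, card_empty, Nat.cast_zero]
    positivity
  have hcount := card_filter_superset_le_of_small_not_cnfEval hC
    (fun A hA => ⟨(hS A hA).1, (hS A hA).2.1, fun B hBA hBc => (hS A hA).2.2 B hBA hBc.le⟩)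
    hck c ∅ (by simp)
  rw [filter_true_of_mem fun A _ => empty_subset A] at hcount
  calc (#S : ℝ) ≤ (s : ℝ) ^ c * (n - c).choose (k - c) := by exact_mod_cast hcount
    _ ≤ n.choose k * ((s : ℝ) * k / n) ^ c := pow_mul_choose_sub_le hck hkn s

end smallCliqueDNF

theorem cnf_to_dnf_switching_small_clique_error_general
    (n k s t : ℕ) (hkn : k ≤ n)
    (C : Finset (Finset (Edge n))) (hC : ∀ q ∈ C, q.card ≤ s)
    (R : Finset (Edge n)) :
    ∃ D : Finset (Finset (Edge n)),
      (∀ q ∈ D, q.card ≤ t) ∧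
      (∀ G : Finset (Edge n), G ⊆ Rᶜ → dnfEval D (G ∪ R) → cnfEval C (G ∪ R)) ∧
      ((ZR k (cnfEval C) R \ ZR k (dnfEval D) R).card : ℝ) ≤
        (Nat.choose n k : ℝ) * (((s : ℝ) * k / n) ^ (Real.sqrt ((t : ℝ) / 2))) := by
  refine ⟨smallCliqueDNF C R ⌈√((t : ℝ) / 2)⌉₊,
    fun q hq => (card_le_of_mem_smallCliqueDNF hq).trans (choose_two_ceil_sqrt_half_le t),
    fun G _ => cnfEval_of_dnfEval_smallCliqueDNF subset_union_right, ?_⟩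
  refine le_mul_rpow_of_le_mul_pow (by positivity) ?_ (card_ZR_sdiff_smallCliqueDNF_le hkn hC)
    (by positivity) (Real.sqrt_nonneg _) (Nat.le_ceil _)
  exact_mod_cast (card_le_card sdiff_subset).trans (card_ZR_le k _ R)

/-- CNF to DNF switching with small clique error: for every monotone `s`-CNF
`f` on `K([n])` and monotone restriction `R`, there is a monotone `t`-DNF `g`
with `g_R ≤ f_R` and `|Z_R(f) \ Z_R(g)| ≤ C(n,k) (s k / n)^√(t/2)`. -/
theorem cnf_to_dnf_switching_small_clique_error
    (n k s t : ℕ) (hn : 0 < n) (hk : 0 < k) (hs : 0 < s) (ht : 0 < t)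
    (hkn : k ≤ n)
    (C : Finset (Finset (Edge n))) (hC : ∀ q ∈ C, q.card ≤ s)
    (R : Finset (Edge n)) :
    ∃ D : Finset (Finset (Edge n)),
      (∀ q ∈ D, q.card ≤ t) ∧
      (∀ G : Finset (Edge n), G ⊆ Rᶜ → dnfEval D (G ∪ R) → cnfEval C (G ∪ R)) ∧
      ((ZR k (cnfEval C) R \ ZR k (dnfEval D) R).card : ℝ) ≤
        (Nat.choose n k : ℝ) * (((s : ℝ) * k / n) ^ (Real.sqrt ((t : ℝ) / 2))) :=
  cnf_to_dnf_switching_small_clique_error_general n k s t hkn C hC R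
end

section
/- Let n, k, s be positive integers with k ≤ n, let f be a monotone s-CNF on the variable set K([n]), let R ⊆ K([n]) be a monotone restriction, and let d ≥ 0 be an integer with d + 1 ≤ k. Then there exists a monotone DNF g on K([n]) each of whose terms has the form K(A) for some set A ⊆ [n] with |A| ≤ 2d (hence each term has at most binom(2d,2) variables), such that g_R ≤ f_R (pointwise on subsets of K([n]) \ R) and |Z_R(f) \ Z_R(g)| ≤ s^{d+1} · binom(n−(d+1), k−(d+1)). -/
/-!
Build the canonical decision tree: starting from the empty vertex set `B`, as long as
`f(K(B) ∪ R) = 0` some clause `q` is false on `K(B) ∪ R`; branch over its at most `s` edges `e`,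
adding the two endpoints of `e` to `B`. A node at which `f(K(B) ∪ R) = 1` is reached within `d`
branchings has `|B| ≤ 2d` and becomes a term `K(B)`; after `d + 1` branchings we stop at a leaf
with `|B| ≥ d + 1`. There are at most `s^(d+1)` leaves, and every `k`-clique `A` with
`f(K(A) ∪ R) = 1` follows a path of the tree down to a term or a leaf contained in `A`. Hence a
clique missed by the DNF contains a leaf, and each leaf lies in at most `C(n-(d+1), k-(d+1))`
`k`-cliques.
-/

open Finset

lemma cnfEval.mono {α : Type} [DecidableEq α] {C : Finset (Finset α)} {G G' : Finset α}
    (h : cnfEval C G) (hG : G ⊆ G') : cnfEval C G' :=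
  fun q hq => (h q hq).mono (inter_subset_inter_left hG)

lemma card_filter_card_eq_superset_le {α : Type*} [Fintype α] [DecidableEq α] {B : Finset α}
    {k m : ℕ} (hm : m ≤ #B) :
    #{A : Finset α | #A = k ∧ B ⊆ A} ≤ (Fintype.card α - m).choose (k - m) := by
  obtain ⟨B₀, hB₀B, hB₀⟩ := exists_subset_card_eq hm
  have hsub : ({A : Finset α | #A = k ∧ B ⊆ A} : Finset _) ⊆
      (powersetCard (k - m) B₀ᶜ).image (· ∪ B₀) := by
    intro A hA
    obtain ⟨hAk, hBA⟩ := (mem_filter.1 hA).2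
    have hB₀A : B₀ ⊆ A := hB₀B.trans hBA
    refine mem_image.2 ⟨A \ B₀, mem_powersetCard.2 ⟨?_, ?_⟩, sdiff_union_of_subset hB₀A⟩
    · simp [sdiff_eq_inter_compl]
    · rw [card_sdiff_of_subset hB₀A, hAk, hB₀]
  calc #{A : Finset α | #A = k ∧ B ⊆ A} ≤ #((powersetCard (k - m) B₀ᶜ).image (· ∪ B₀)) :=
        card_le_card hsub
    _ ≤ #(powersetCard (k - m) B₀ᶜ) := card_image_le
    _ = (Fintype.card α - m).choose (k - m) := by rw [card_powersetCard, card_compl, hB₀]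

section Edge

variable {n : ℕ}

lemma mem_KE_iff {e : Edge n} {A : Finset (Fin n)} : e ∈ KE A ↔ e.1.toFinset ⊆ A := by
  simp [KE, mem_sym2_iff, subset_iff, Sym2.mem_toFinset]

lemma card_union_toFinset_le (B : Finset (Fin n)) (e : Edge n) :
    #(B ∪ e.1.toFinset) ≤ #B + 2 :=
  (card_union_le _ _).trans_eq (by rw [Sym2.card_toFinset_of_not_isDiag _ e.2])

lemma card_lt_card_union_toFinset {B : Finset (Fin n)} {e : Edge n} (he : e ∉ KE B) :
    #B < #(B ∪ e.1.toFinset) :=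
  card_lt_card (Finset.ssubset_iff_subset_ne.2 ⟨subset_union_left, fun h =>
    he (mem_KE_iff.2 (h ▸ subset_union_right))⟩)

end Edge

section SwitchingTree

variable {n : ℕ} (C : Finset (Finset (Edge n))) (R : Finset (Edge n)) (s : ℕ)

/-- `T` and `L` are the vertex sets of the accepting nodes and of the depth-`δ` nodes of a
canonical decision tree for `cnfEval C` under `R` rooted at `B`. Accepting nodes have depth `< δ`,
whence the `+ 2` in `card_term_le`. -/
structure IsSwitchingTree (δ : ℕ) (B : Finset (Fin n)) (T L : Finset (Finset (Fin n))) :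
    Prop where
  card_term_le : ∀ A ∈ T, #A + 2 ≤ #B + 2 * δ
  cnfEval_term : ∀ A ∈ T, cnfEval C (KE A ∪ R)
  card_leaf_ge : ∀ A ∈ L, #B + δ ≤ #A
  card_leaves_le : #L ≤ s ^ δ
  covers : ∀ A, B ⊆ A → cnfEval C (KE A ∪ R) → (∃ A' ∈ T, A' ⊆ A) ∨ ∃ A' ∈ L, A' ⊆ A

variable {C R s}

namespace IsSwitchingTree

lemma leaf (B : Finset (Fin n)) : IsSwitchingTree C R s 0 B ∅ {B} where
  card_term_le := by simp
  cnfEval_term := by simp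
  card_leaf_ge := by simp
  card_leaves_le := by simp
  covers _ hBA _ := Or.inr ⟨B, mem_singleton_self B, hBA⟩

lemma term {δ : ℕ} {B : Finset (Fin n)} (hB : cnfEval C (KE B ∪ R)) :
    IsSwitchingTree C R s (δ + 1) B {B} ∅ where
  card_term_le := by simp
  cnfEval_term := by simpa using hB
  card_leaf_ge := by simp
  card_leaves_le := by simp
  covers _ hBA _ := Or.inl ⟨B, mem_singleton_self B, hBA⟩

lemma branch {δ : ℕ} {B : Finset (Fin n)} {q : Finset (Edge n)} (hqC : q ∈ C) (hqs : #q ≤ s)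
    (hq : Disjoint q (KE B ∪ R)) {T L : Edge n → Finset (Finset (Fin n))}
    (hTL : ∀ e ∈ q, IsSwitchingTree C R s δ (B ∪ e.1.toFinset) (T e) (L e)) :
    IsSwitchingTree C R s (δ + 1) B (q.biUnion T) (q.biUnion L) where
  card_term_le A hA := by
    obtain ⟨e, he, hAe⟩ := mem_biUnion.1 hA
    have := (hTL e he).card_term_le A hAe
    have := card_union_toFinset_le B e
    omega
  cnfEval_term A hA := by
    obtain ⟨e, he, hAe⟩ := mem_biUnion.1 hA
    exact (hTL e he).cnfEval_term A hAe
  card_leaf_ge A hA := by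
    obtain ⟨e, he, hAe⟩ := mem_biUnion.1 hA
    have := (hTL e he).card_leaf_ge A hAe
    have := card_lt_card_union_toFinset (disjoint_left.1 hq he <| mem_union_left R ·)
    omega
  card_leaves_le := calc
    #(q.biUnion L) ≤ #q * s ^ δ := card_biUnion_le_card_mul _ _ _ fun e he =>
      (hTL e he).card_leaves_le
    _ ≤ s ^ (δ + 1) := by rw [pow_succ']; exact Nat.mul_le_mul_right _ hqs
  covers A hBA hA := by
    -- `K(A) ∪ R` satisfies `q` while `R` does not, so some edge of `q` lies in `K(A)`.
    obtain ⟨e, he⟩ := hA q hqC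
    obtain ⟨heq, heA⟩ := mem_inter.1 he
    have heKA : e ∈ KE A := (mem_union.1 heA).resolve_right
      (disjoint_left.1 hq heq <| mem_union_right _ ·)
    have hsub : B ∪ e.1.toFinset ⊆ A := union_subset hBA (mem_KE_iff.1 heKA)
    rcases (hTL e heq).covers A hsub ‹_› with ⟨A', hA', hA'A⟩ | ⟨A', hA', hA'A⟩
    · exact Or.inl ⟨A', mem_biUnion.2 ⟨e, heq, hA'⟩, hA'A⟩
    · exact Or.inr ⟨A', mem_biUnion.2 ⟨e, heq, hA'⟩, hA'A⟩

lemma sdiff_ZR_subset {k δ : ℕ} {T L : Finset (Finset (Fin n))}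
    (h : IsSwitchingTree C R s δ ∅ T L) :
    ZR k (cnfEval C) R \ ZR k (dnfEval (T.image KE)) R ⊆
      L.biUnion fun B => {A | #A = k ∧ B ⊆ A} := by
  intro A hA
  simp only [ZR, mem_sdiff, mem_filter, mem_univ, true_and, not_and] at hA
  obtain ⟨⟨hAk, hAf⟩, hAg⟩ := hA
  rcases h.covers A (empty_subset A) hAf with ⟨A', hA', hA'A⟩ | ⟨B, hB, hBA⟩
  · exact absurd ⟨KE A', mem_image_of_mem KE hA', (KE_mono hA'A).trans subset_union_left⟩
      (hAg hAk)
  · exact mem_biUnion.2 ⟨B, hB, mem_filter.2 ⟨mem_univ A, hAk, hBA⟩⟩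

end IsSwitchingTree

lemma exists_isSwitchingTree (hC : ∀ q ∈ C, #q ≤ s) (δ : ℕ) (B : Finset (Fin n)) :
    ∃ T L, IsSwitchingTree C R s δ B T L := by
  induction δ generalizing B with
  | zero => exact ⟨_, _, .leaf B⟩
  | succ δ ih =>
    by_cases hB : cnfEval C (KE B ∪ R)
    · exact ⟨_, _, .term hB⟩
    · obtain ⟨q, hqC, hq⟩ : ∃ q ∈ C, Disjoint q (KE B ∪ R) := by
        simpa only [cnfEval, not_forall, not_nonempty_iff_eq_empty,
          ← disjoint_iff_inter_eq_empty, exists_prop] using hB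
      choose T L hTL using fun e : Edge n => ih (B ∪ e.1.toFinset)
      exact ⟨_, _, .branch hqC (hC q hqC) hq fun e _ => hTL e⟩

end SwitchingTree

theorem cnf_to_dnf_switching_clique_terms_general
    (n k s d : ℕ)
    (C : Finset (Finset (Edge n))) (hC : ∀ q ∈ C, q.card ≤ s)
    (R : Finset (Edge n)) :
    ∃ T : Finset (Finset (Fin n)),
      (∀ A ∈ T, A.card ≤ 2 * d) ∧
      (∀ G : Finset (Edge n), G ⊆ Rᶜ →
        dnfEval (T.image KE) (G ∪ R) → cnfEval C (G ∪ R)) ∧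
      (ZR k (cnfEval C) R \ ZR k (dnfEval (T.image KE)) R).card ≤
        s ^ (d + 1) * Nat.choose (n - (d + 1)) (k - (d + 1)) := by
  obtain ⟨T, L, hTL⟩ := exists_isSwitchingTree (R := R) hC (d + 1) ∅
  refine ⟨T, fun A hA => ?_, fun G _ ⟨_, hq, hqG⟩ => ?_, ?_⟩
  · have := hTL.card_term_le A hA
    rw [card_empty] at this
    omega
  · obtain ⟨A, hA, rfl⟩ := mem_image.1 hq
    exact (hTL.cnfEval_term A hA).mono (union_subset hqG subset_union_right)
  · have hleaf : ∀ B ∈ L, #{A : Finset (Fin n) | #A = k ∧ B ⊆ A} ≤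
        (n - (d + 1)).choose (k - (d + 1)) := fun B hB => by
      simpa only [Fintype.card_fin] using
        card_filter_card_eq_superset_le (k := k) (m := d + 1)
          ((hTL.card_leaf_ge B hB).trans' (by simp))
    calc _ ≤ #(L.biUnion fun B => {A | #A = k ∧ B ⊆ A}) := card_le_card hTL.sdiff_ZR_subset
      _ ≤ #L * (n - (d + 1)).choose (k - (d + 1)) := card_biUnion_le_card_mul _ _ _ hleaf
      _ ≤ _ := Nat.mul_le_mul_right _ hTL.card_leaves_le

/-- CNF to DNF switching, clique-term form: for every monotone `s`-CNF `f` on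
`K([n])`, monotone restriction `R`, and depth parameter `d` with `d + 1 ≤ k`,
there is a monotone DNF `g` whose terms are of the form `K(A)` with
`|A| ≤ 2d` (hence with at most `C(2d,2)` variables each), such that
`g_R ≤ f_R` and `|Z_R(f) \ Z_R(g)| ≤ s^(d+1) · C(n-(d+1), k-(d+1))`. -/
theorem cnf_to_dnf_switching_clique_terms
    (n k s d : ℕ) (hn : 0 < n) (hk : 0 < k) (hs : 0 < s)
    (hkn : k ≤ n) (hd : d + 1 ≤ k)
    (C : Finset (Finset (Edge n))) (hC : ∀ q ∈ C, q.card ≤ s)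
    (R : Finset (Edge n)) :
    ∃ T : Finset (Finset (Fin n)),
      (∀ A ∈ T, A.card ≤ 2 * d) ∧
      (∀ G : Finset (Edge n), G ⊆ Rᶜ →
        dnfEval (T.image KE) (G ∪ R) → cnfEval C (G ∪ R)) ∧
      (ZR k (cnfEval C) R \ ZR k (dnfEval (T.image KE)) R).card ≤
        s ^ (d + 1) * Nat.choose (n - (d + 1)) (k - (d + 1)) :=
  cnf_to_dnf_switching_clique_terms_general n k s d C hC R
end

section
/- Let U be a finite set, let t ≥ 1 and s ≥ 1 be integers, and let g be a monotone t-DNF on U. Let ρ be a random monotone restriction in which each variable u ∈ U is independently left free (assigned ⋆) with probability 1/(2t) and otherwise fixed to true. Then with probability at least 1 − 2^{−s−1}, the restricted function g_ρ on the free variables is computable by a monotone s-CNF (i.e., it equals, as a function, a conjunction of monotone clauses each containing at most s variables). -/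
open Classical

/-- Probability, under the product Bernoulli measure in which each element of
the finite type `α` belongs to a random subset independently with probability
`θ`, of the event `P`. Here the random subset is the set of free (`⋆`)
variables of a random monotone restriction. -/
noncomputable def subsetProb {α : Type} [Fintype α] (θ : ℝ) (P : Finset α → Prop) : ℝ :=
  ∑ G ∈ (Finset.univ : Finset α).powerset,
    if P G then θ ^ G.card * (1 - θ) ^ (Fintype.card α - G.card) else 0

section Aux

variable {α : Type} [DecidableEq α]

/-- Pick (using choice) a term of `D` disjoint from `used`, if one exists. -/
noncomputable def pickTerm (D : Finset (Finset α)) (used : Finset α) : Option (Finset α) :=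
  if h : ∃ q ∈ D, ∀ u ∈ used, u ∉ q then some h.choose else none

lemma pickTerm_some {D : Finset (Finset α)} {used : Finset α} {q : Finset α}
    (h : pickTerm D used = some q) : q ∈ D ∧ ∀ u ∈ used, u ∉ q := by
  rw [pickTerm] at h
  split at h
  next hne =>
    obtain rfl := Option.some.inj h
    exact hne.choose_spec
  next => cases h

lemma pickTerm_exists {D : Finset (Finset α)} {used : Finset α}
    (h : ∃ q ∈ D, ∀ u ∈ used, u ∉ q) : ∃ q, pickTerm D used = some q := by
  obtain ⟨q, hq, hq2⟩ := h
  rw [pickTerm]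
  split
  next => exact ⟨_, rfl⟩
  next hne => exact (hne ⟨q, hq, hq2⟩).elim


/-- Canonical adaptive chains of length `k`: each new element is chosen from
the picked term disjoint from the elements already chosen. -/
noncomputable def chains (D : Finset (Finset α)) : ℕ → Finset (List α)
  | 0 => {[]}
  | k+1 => (chains D k).biUnion (fun l =>
      match pickTerm D l.toFinset with
      | none => ∅
      | some q => q.image (fun u => u :: l))

lemma mem_chains_succ {D : Finset (Finset α)} {k : ℕ} {l : List α} {q : Finset α} {u : α}
    (hl : l ∈ chains D k) (hp : pickTerm D l.toFinset = some q) (hu : u ∈ q) :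
    u :: l ∈ chains D (k+1) := by
  rw [chains]
  exact Finset.mem_biUnion.2 ⟨l, hl, by rw [hp]; exact Finset.mem_image_of_mem _ hu⟩

lemma chains_succ_elim {D : Finset (Finset α)} {k : ℕ} {l' : List α}
    (h : l' ∈ chains D (k+1)) :
    ∃ l ∈ chains D k, ∃ q, pickTerm D l.toFinset = some q ∧ ∃ u ∈ q, l' = u :: l := by
  rw [chains] at h
  obtain ⟨l, hl, hmem⟩ := Finset.mem_biUnion.1 h
  rcases hp : pickTerm D l.toFinset with _ | q
  · rw [hp] at hmem; exact absurd hmem (Finset.notMem_empty _)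
  · rw [hp] at hmem
    obtain ⟨u, hu, rfl⟩ := Finset.mem_image.1 hmem
    exact ⟨l, hl, q, hp, u, hu, rfl⟩

lemma chains_toFinset_card {D : Finset (Finset α)} :
    ∀ k, ∀ l ∈ chains D k, l.toFinset.card = k := by
  intro k
  induction k with
  | zero =>
    intro l hl
    rw [chains, Finset.mem_singleton] at hl
    subst hl; simp
  | succ k ih =>
    intro l' hl'
    obtain ⟨l, hl, q, hp, u, hu, rfl⟩ := chains_succ_elim hl'
    have hnot : u ∉ l.toFinset := fun hmem => (pickTerm_some hp).2 u hmem hu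
    rw [List.toFinset_cons, Finset.card_insert_of_notMem hnot, ih l hl]

lemma chains_card_le {D : Finset (Finset α)} {t : ℕ} (hD : ∀ q ∈ D, q.card ≤ t) :
    ∀ k, (chains D k).card ≤ t ^ k := by
  intro k
  induction k with
  | zero => simp [chains]
  | succ k ih =>
    rw [chains]
    calc ((chains D k).biUnion _).card
        ≤ ∑ l ∈ chains D k, (match pickTerm D l.toFinset with
            | none => (∅ : Finset (List α))
            | some q => q.image (fun u => u :: l)).card := Finset.card_biUnion_le
      _ ≤ ∑ _l ∈ chains D k, t := by
          apply Finset.sum_le_sum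
          intro l _
          rcases hp : pickTerm D l.toFinset with _ | q
          · simp
          · simp only
            exact le_trans Finset.card_image_le (hD q (pickTerm_some hp).1)
      _ = (chains D k).card * t := by rw [Finset.sum_const, smul_eq_mul]
      _ ≤ t ^ k * t := Nat.mul_le_mul_right t ih
      _ = t ^ (k+1) := (pow_succ t k).symm

lemma exists_chain {D : Finset (Finset α)} {T : Finset α}
    (hhit : ∀ q ∈ D, (q ∩ T).Nonempty)
    (hext : ∀ used : Finset α, used ⊆ T → used.card < T.card →
      ∃ q ∈ D, ∀ u ∈ used, u ∉ q) :
    ∀ k, k ≤ T.card → ∃ l ∈ chains D k, l.toFinset ⊆ T := by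
  intro k
  induction k with
  | zero =>
    intro _
    exact ⟨[], by rw [chains]; exact Finset.mem_singleton_self _, by simp⟩
  | succ k ih =>
    intro hk
    obtain ⟨l, hl, hlT⟩ := ih (Nat.le_of_succ_le hk)
    have hcard : l.toFinset.card < T.card := by
      rw [chains_toFinset_card k l hl]; omega
    obtain ⟨q, hp⟩ := pickTerm_exists (hext l.toFinset hlT hcard)
    obtain ⟨hqD, _⟩ := pickTerm_some hp
    obtain ⟨u, hu⟩ := hhit q hqD
    rw [Finset.mem_inter] at hu
    refine ⟨u :: l, mem_chains_succ hl hp hu.1, ?_⟩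
    rw [List.toFinset_cons]
    exact Finset.insert_subset hu.2 hlT

lemma sum_ite_eq_filter {ι : Type} (s : Finset ι) (p : ι → Prop) (f : ι → ℝ) :
    (∑ i ∈ s, if p i then f i else 0) = ∑ i ∈ s.filter p, f i :=
  (Finset.sum_filter _ _).symm

lemma ite_le_sum_ite {ι : Type} (s : Finset ι) (p : ι → Prop) (P0 : Prop) (w : ℝ)
    (hw : 0 ≤ w) (h : P0 → ∃ i ∈ s, p i) :
    (if P0 then w else 0) ≤ ∑ i ∈ s, if p i then w else 0 := by
  by_cases hP : P0
  · rw [if_pos hP]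
    obtain ⟨i₀, hi₀, hpi₀⟩ := h hP
    have hle : (if p i₀ then w else 0) ≤ ∑ i ∈ s, if p i then w else 0 :=
      Finset.single_le_sum (f := fun i => if p i then w else 0)
        (fun i _ => by beta_reduce; split_ifs with hh; exacts [hw, le_rfl]) hi₀
    rw [if_pos hpi₀] at hle
    exact hle
  · rw [if_neg hP]
    refine Finset.sum_nonneg fun i _ => ?_
    split_ifs
    · exact hw
    · exact le_rfl

/-- Normalization: Bernoulli weights over the powerset of `A` sum to 1. -/
lemma sum_powerset_weight (θ : ℝ) (A : Finset α) :
    ∑ K ∈ A.powerset, θ ^ K.card * (1 - θ) ^ (A.card - K.card) = 1 := by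
  calc ∑ K ∈ A.powerset, θ ^ K.card * (1 - θ) ^ (A.card - K.card)
      = ∑ K ∈ A.powerset, (∏ _i ∈ K, θ) * ∏ _i ∈ A \ K, (1 - θ) := by
        refine Finset.sum_congr rfl fun K hK => ?_
        rw [Finset.prod_const, Finset.prod_const,
          Finset.card_sdiff_of_subset (Finset.mem_powerset.1 hK)]
    _ = ∏ _i ∈ A, (θ + (1 - θ)) := (Finset.prod_add _ _ _).symm
    _ = 1 := by simp

section Classicalized

attribute [local instance 2000] Classical.propDecidable

lemma subsetProb_superset [Fintype α] (θ : ℝ) (S : Finset α) :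
    subsetProb θ (fun F => S ⊆ F) = θ ^ S.card := by
  unfold subsetProb
  beta_reduce
  rw [sum_ite_eq_filter]
  refine Eq.trans (Finset.sum_nbij'
    (t := (Finset.univ \ S).powerset)
    (g := fun K => θ ^ S.card *
      (θ ^ K.card * (1 - θ) ^ ((Finset.univ \ S : Finset α).card - K.card)))
    (fun G => G \ S) (fun K => S ∪ K) ?_ ?_ ?_ ?_ ?_) ?_
  · intro G hG
    rw [Finset.mem_filter] at hG
    exact Finset.mem_powerset.2
      (Finset.sdiff_subset_sdiff (Finset.subset_univ G) (Finset.Subset.refl S))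
  · intro K hK
    exact Finset.mem_filter.2 ⟨Finset.mem_powerset.2 (Finset.subset_univ _),
      Finset.subset_union_left⟩
  · intro G hG
    rw [Finset.mem_filter] at hG
    exact Finset.union_sdiff_of_subset hG.2
  · intro K hK
    have hdisj : Disjoint S K := by
      rw [Finset.disjoint_left]
      intro a haS haK
      have := Finset.mem_powerset.1 hK haK
      rw [Finset.mem_sdiff] at this
      exact this.2 haS
    exact Finset.union_sdiff_cancel_left hdisj
  · intro G hG
    rw [Finset.mem_filter] at hG
    have hsub := hG.2
    have hc : G.card = S.card + (G \ S).card := by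
      rw [← Finset.card_sdiff_add_card_eq_card hsub]; ring
    have hc2 : (Finset.univ \ S : Finset α).card - (G \ S).card
        = Fintype.card α - G.card := by
      rw [Finset.card_sdiff_of_subset (Finset.subset_univ S), Finset.card_univ, hc, Nat.sub_sub]
    beta_reduce
    rw [hc2, hc, pow_add]
    ring
  · rw [← Finset.mul_sum, sum_powerset_weight, mul_one]

lemma subsetProb_not {α : Type} [Fintype α] [DecidableEq α] (θ : ℝ) (P : Finset α → Prop) :
    subsetProb θ P = 1 - subsetProb θ (fun F => ¬ P F) := by
  have hw := sum_powerset_weight θ (Finset.univ : Finset α)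
  rw [Finset.card_univ] at hw
  have h : subsetProb θ P + subsetProb θ (fun F => ¬ P F) = 1 := by
    unfold subsetProb
    beta_reduce
    rw [← Finset.sum_add_distrib]
    refine Eq.trans (Finset.sum_congr rfl fun G _ => ?_) hw
    by_cases hP : P G <;> simp [hP]
  linarith

end Classicalized

end Aux

/-- DNF to CNF switching: for a monotone `t`-DNF `g` on a finite set `U`, after
a random monotone restriction leaving each variable free independently with
probability `1/(2t)` (and fixing the others to true), with probability at
least `1 - 2^(-s-1)` the restricted function is computable by a monotone
`s`-CNF on the free variables. -/
theorem dnf_to_cnf_switching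
    {α : Type} [Fintype α] [DecidableEq α] (t s : ℕ) (ht : 1 ≤ t) (hs : 1 ≤ s)
    (D : Finset (Finset α)) (hD : ∀ q ∈ D, q.card ≤ t) :
    1 - (2 : ℝ) ^ (-(s : ℝ) - 1) ≤
      subsetProb (1 / (2 * (t : ℝ)))
        (fun F : Finset α =>
          ∃ C : Finset (Finset α),
            (∀ q ∈ C, q.card ≤ s ∧ q ⊆ F) ∧
            ∀ G : Finset α, G ⊆ F →
              (dnfEval D (G ∪ (Finset.univ \ F)) ↔ cnfEval C G)) := by
  classical
  set θ : ℝ := 1 / (2 * (t : ℝ)) with hθdef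
  have ht0 : (0 : ℝ) < (t : ℝ) := by exact_mod_cast ht
  have hθ0 : 0 ≤ θ := by positivity
  have ht1 : (1 : ℝ) ≤ (t : ℝ) := by exact_mod_cast ht
  have hθ1 : θ ≤ 1 := by
    rw [hθdef, div_le_one (by linarith)]
    linarith
  set P : Finset α → Prop := fun F =>
    ∃ C : Finset (Finset α),
      (∀ q ∈ C, q.card ≤ s ∧ q ⊆ F) ∧
      ∀ G : Finset α, G ⊆ F →
        (dnfEval D (G ∪ (Finset.univ \ F)) ↔ cnfEval C G) with hPdef
  -- Step 1: if no chain of length s+1 is free, then P holds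
  have step1 : ∀ F : Finset α, (∀ l ∈ chains D (s+1), ¬ l.toFinset ⊆ F) → P F := by
    intro F hno
    set sat : Finset α → Prop := fun G => ∃ q ∈ D, q ∩ F ⊆ G with hsatdef
    have satmono : ∀ {G H : Finset α}, G ⊆ H → sat G → sat H := by
      rintro G H hGH ⟨q, hq, hq2⟩
      exact ⟨q, hq, hq2.trans hGH⟩
    set MZ : Finset α → Prop := fun G => ¬ sat G ∧ ∀ u ∈ F \ G, sat (insert u G) with hMZdef
    set C : Finset (Finset α) :=
      (F.powerset.filter MZ).image (fun G => F \ G) with hCdef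
    -- extension to a maximal zero
    have ext : ∀ G' : Finset α, G' ⊆ F → ¬ sat G' →
        ∃ G, G' ⊆ G ∧ G ∈ F.powerset.filter MZ := by
      intro G' hG'F hG'sat
      obtain ⟨G, hGmem, hGmax⟩ := Finset.exists_max_image
        (F.powerset.filter (fun H => G' ⊆ H ∧ ¬ sat H)) Finset.card
        ⟨G', Finset.mem_filter.2 ⟨Finset.mem_powerset.2 hG'F, le_refl G', hG'sat⟩⟩
      rw [Finset.mem_filter, Finset.mem_powerset] at hGmem
      obtain ⟨hGF, hG'G, hGsat⟩ := hGmem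
      refine ⟨G, hG'G, Finset.mem_filter.2 ⟨Finset.mem_powerset.2 hGF, hGsat, ?_⟩⟩
      intro u hu
      rw [Finset.mem_sdiff] at hu
      by_contra hins
      have hmem : insert u G ∈ F.powerset.filter (fun H => G' ⊆ H ∧ ¬ sat H) :=
        Finset.mem_filter.2 ⟨Finset.mem_powerset.2 (Finset.insert_subset hu.1 hGF),
          hG'G.trans (Finset.subset_insert u G), hins⟩
      have := hGmax _ hmem
      rw [Finset.card_insert_of_notMem hu.2] at this
      omega
    -- clauses are small
    have clause_small : ∀ G ∈ F.powerset.filter MZ, (F \ G).card ≤ s := by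
      intro G hG
      by_contra hbig
      push_neg at hbig
      rw [Finset.mem_filter, Finset.mem_powerset] at hG
      obtain ⟨hGF, hGsat, hGmax⟩ := hG
      have hhit : ∀ q ∈ D, (q ∩ (F \ G)).Nonempty := by
        intro q hq
        by_contra hempty
        rw [Finset.not_nonempty_iff_eq_empty, ← Finset.disjoint_iff_inter_eq_empty] at hempty
        apply hGsat
        refine ⟨q, hq, fun u hu => ?_⟩
        rw [Finset.mem_inter] at hu
        by_contra huG
        exact (Finset.disjoint_left.1 hempty) hu.1 (Finset.mem_sdiff.2 ⟨hu.2, huG⟩)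
      have hext : ∀ used : Finset α, used ⊆ F \ G → used.card < (F \ G).card →
          ∃ q ∈ D, ∀ u ∈ used, u ∉ q := by
        intro used husub hucard
        have hne : ¬ (F \ G ⊆ used) := fun hc =>
          absurd (Finset.card_le_card hc) (by omega)
        obtain ⟨v, hvT, hvused⟩ := Finset.not_subset.1 hne
        obtain ⟨q, hqD, hq2⟩ := hGmax v hvT
        refine ⟨q, hqD, fun u huused huq => ?_⟩
        have huT := husub huused
        rw [Finset.mem_sdiff] at huT
        have : u ∈ q ∩ F := Finset.mem_inter.2 ⟨huq, huT.1⟩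
        have := hq2 this
        rw [Finset.mem_insert] at this
        rcases this with h | h
        · exact hvused (h ▸ huused)
        · exact huT.2 h
      obtain ⟨l, hl, hlT⟩ := exists_chain hhit hext (s+1) hbig
      exact hno l hl (hlT.trans (Finset.sdiff_subset))
    refine ⟨C, ?_, ?_⟩
    · intro c hc
      obtain ⟨G, hG, rfl⟩ := Finset.mem_image.1 hc
      exact ⟨clause_small G hG, Finset.sdiff_subset⟩
    · intro G' hG'F
      have dnf_iff : dnfEval D (G' ∪ (Finset.univ \ F)) ↔ sat G' := by
        constructor
        · rintro ⟨q, hq, hsub⟩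
          refine ⟨q, hq, fun u hu => ?_⟩
          rw [Finset.mem_inter] at hu
          have := hsub hu.1
          rw [Finset.mem_union, Finset.mem_sdiff] at this
          rcases this with h | h
          · exact h
          · exact absurd hu.2 h.2
        · rintro ⟨q, hq, hsub⟩
          refine ⟨q, hq, fun u hu => ?_⟩
          rw [Finset.mem_union, Finset.mem_sdiff]
          by_cases huF : u ∈ F
          · exact Or.inl (hsub (Finset.mem_inter.2 ⟨hu, huF⟩))
          · exact Or.inr ⟨Finset.mem_univ u, huF⟩
      rw [dnf_iff]
      constructor
      · intro hsatG' c hc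
        obtain ⟨G, hG, rfl⟩ := Finset.mem_image.1 hc
        rw [Finset.mem_filter, Finset.mem_powerset] at hG
        by_contra hempty
        rw [Finset.not_nonempty_iff_eq_empty, ← Finset.disjoint_iff_inter_eq_empty] at hempty
        have hG'G : G' ⊆ G := by
          intro u hu
          by_contra huG
          exact (Finset.disjoint_left.1 hempty)
            (Finset.mem_sdiff.2 ⟨hG'F hu, huG⟩) hu
        exact hG.2.1 (satmono hG'G hsatG')
      · intro hcnf
        by_contra hsatG'
        obtain ⟨G, hG'G, hGmem⟩ := ext G' hG'F hsatG'
        have hc : F \ G ∈ C := Finset.mem_image_of_mem _ hGmem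
        obtain ⟨u, hu⟩ := hcnf _ hc
        rw [Finset.mem_inter, Finset.mem_sdiff] at hu
        exact hu.1.2 (hG'G hu.2)
  -- Step 2: probability bound
  have wnonneg : ∀ G : Finset α,
      0 ≤ θ ^ G.card * (1 - θ) ^ (Fintype.card α - G.card) := by
    intro G
    apply mul_nonneg (pow_nonneg hθ0 _) (pow_nonneg (by linarith) _)
  have badbound : subsetProb θ (fun F => ¬ P F)
      ≤ ∑ l ∈ chains D (s+1), subsetProb θ (fun F => l.toFinset ⊆ F) := by
    unfold subsetProb
    beta_reduce
    rw [Finset.sum_comm]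
    refine Finset.sum_le_sum fun G _ => ?_
    refine ite_le_sum_ite _ _ _ _ (wnonneg G) fun hB => ?_
    by_contra hc
    push_neg at hc
    exact hB (step1 G hc)
  have chainprob : ∀ l ∈ chains D (s+1),
      subsetProb θ (fun F => l.toFinset ⊆ F) = θ ^ (s+1) := by
    intro l hl
    rw [subsetProb_superset, chains_toFinset_card (s+1) l hl]
  have hsum : ∑ l ∈ chains D (s+1), subsetProb θ (fun F => l.toFinset ⊆ F)
      = ((chains D (s+1)).card : ℝ) * θ ^ (s+1) := by
    rw [Finset.sum_congr rfl chainprob, Finset.sum_const, nsmul_eq_mul]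
  have hcard : ((chains D (s+1)).card : ℝ) ≤ (t : ℝ) ^ (s+1) := by
    have := chains_card_le hD (s+1)
    exact_mod_cast this
  have hhalf : (t : ℝ) ^ (s+1) * θ ^ (s+1) = (1/2 : ℝ) ^ (s+1) := by
    rw [← mul_pow, hθdef]
    congr 1
    field_simp
  have hfinal : subsetProb θ (fun F => ¬ P F) ≤ (1/2 : ℝ) ^ (s+1) := by
    calc subsetProb θ (fun F => ¬ P F)
        ≤ ((chains D (s+1)).card : ℝ) * θ ^ (s+1) := by rw [← hsum]; exact badbound
      _ ≤ (t : ℝ) ^ (s+1) * θ ^ (s+1) :=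
          mul_le_mul_of_nonneg_right hcard (pow_nonneg hθ0 _)
      _ = (1/2 : ℝ) ^ (s+1) := hhalf
  have hrpow : (2 : ℝ) ^ (-(s : ℝ) - 1) = (1/2 : ℝ) ^ (s+1) := by
    rw [show -(s : ℝ) - 1 = -(((s+1 : ℕ) : ℝ)) by push_cast; ring,
      Real.rpow_neg (by norm_num), Real.rpow_natCast, one_div, inv_pow]
  rw [subsetProb_not θ P, hrpow]
  linarith
end
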